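/- arXiv:1508.04096 — 5 statements merged into one kernel-verified Lean document; each statement's English description precedes it below -/
import Mathlib

section
/- Let M₀ be a symmetric positive definite n×n real matrix, let Z₀ be a symmetric positive definite matrix with Z₀ ≈_ε M₀⁻¹ for some ε ≥ 0, let b₀ ∈ ℝⁿ, let x* = M₀⁻¹ b₀, and set x̃ = Z₀ b₀. Then ‖x* − x̃‖_{M₀} ≤ √(2 e^ε (e^ε − 1)) · ‖x*‖_{M₀}. -/
open Matrix

/-- Loewner order: `X ⪯ Y` iff `Y - X` is positive semidefinite. -/
def LoewnerLE {k : Type*} [Fintype k] (X Y : Matrix k k ℝ) : Prop := (Y - X).PosSemidef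

/-- `X ≈_α Y` iff `e^{-α} X ⪯ Y ⪯ e^{α} X` in the Loewner order. -/
def MApprox {k : Type*} [Fintype k] (α : ℝ) (X Y : Matrix k k ℝ) : Prop :=
  LoewnerLE (Real.exp (-α) • X) Y ∧ LoewnerLE Y (Real.exp α • X)


/-- The `M`-norm `‖u‖_M = √(uᵀ M u)`. -/
noncomputable def mnorm {n : ℕ} (M : Matrix (Fin n) (Fin n) ℝ) (u : Fin n → ℝ) : ℝ :=
  Real.sqrt (u ⬝ᵥ M.mulVec u)

/-!
Put `W = M₀⁻¹`, `t = e^ε`, `b = b₀`, `w = bᵀWb`, `s = bᵀZ₀b` and `q = (Z₀b)ᵀM₀(Z₀b)`.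
Expanding, `‖x* − x̃‖²_{M₀} = w − 2s + q` and `‖x*‖²_{M₀} = w`. The approximation gives
`w ≤ ts` and `s ≤ tw`; the only genuinely matrix-valued step is `q ≤ ts`, i.e.
`Z₀M₀Z₀ ⪯ tZ₀`, which follows from `Z₀ ⪯ tW` by testing `Z₀` on `tb − M₀Z₀b`. What is left
is an inequality between four real numbers.
-/

section QuadraticForms

variable {ι : Type*} [Fintype ι]

lemma Matrix.IsHermitian.mulVec_dotProduct_of_real {A : Matrix ι ι ℝ} (hA : A.IsHermitian)
    (x y : ι → ℝ) : A *ᵥ x ⬝ᵥ y = x ⬝ᵥ A *ᵥ y := by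
  rw [dotProduct_comm, dotProduct_mulVec, ← mulVec_transpose,
    ← conjTranspose_eq_transpose_of_trivial, hA.eq, dotProduct_comm]

lemma LoewnerLE.dotProduct_mulVec_le {X Y : Matrix ι ι ℝ} (h : LoewnerLE X Y) (x : ι → ℝ) :
    x ⬝ᵥ X *ᵥ x ≤ x ⬝ᵥ Y *ᵥ x := by
  have := h.dotProduct_mulVec_nonneg x
  rw [star_trivial, sub_mulVec, dotProduct_sub] at this
  linarith

lemma MApprox.dotProduct_mulVec_le_exp_mul_left {α : ℝ} {X Y : Matrix ι ι ℝ}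
    (h : MApprox α X Y) (x : ι → ℝ) :
    x ⬝ᵥ X *ᵥ x ≤ Real.exp α * (x ⬝ᵥ Y *ᵥ x) := by
  have := h.1.dotProduct_mulVec_le x
  rwa [smul_mulVec, dotProduct_smul, smul_eq_mul, Real.exp_neg,
    inv_mul_le_iff₀ (Real.exp_pos α)] at this

lemma MApprox.dotProduct_mulVec_le_exp_mul_right {α : ℝ} {X Y : Matrix ι ι ℝ}
    (h : MApprox α X Y) (x : ι → ℝ) :
    x ⬝ᵥ Y *ᵥ x ≤ Real.exp α * (x ⬝ᵥ X *ᵥ x) := by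
  have := h.2.dotProduct_mulVec_le x
  rwa [smul_mulVec, dotProduct_smul, smul_eq_mul] at this

variable [DecidableEq ι]

lemma inv_mulVec_sub_dotProduct_mulVec {M : Matrix ι ι ℝ} (hM : M.IsHermitian)
    (hMdet : IsUnit M.det) (b y : ι → ℝ) :
    (M⁻¹ *ᵥ b - y) ⬝ᵥ M *ᵥ (M⁻¹ *ᵥ b - y)
      = b ⬝ᵥ M⁻¹ *ᵥ b - 2 * (b ⬝ᵥ y) + y ⬝ᵥ M *ᵥ y := by
  have hMM : M *ᵥ (M⁻¹ *ᵥ b) = b := by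
    rw [mulVec_mulVec, mul_nonsing_inv _ hMdet, one_mulVec]
  have hcross : M⁻¹ *ᵥ b ⬝ᵥ M *ᵥ y = b ⬝ᵥ y := by
    rw [← hM.mulVec_dotProduct_of_real, hMM]
  rw [mulVec_sub, dotProduct_sub, sub_dotProduct, sub_dotProduct, hMM, hcross,
    dotProduct_comm (M⁻¹ *ᵥ b), dotProduct_comm y b]
  ring

lemma inv_mulVec_dotProduct_mulVec {M : Matrix ι ι ℝ} (hMdet : IsUnit M.det) (b : ι → ℝ) :
    M⁻¹ *ᵥ b ⬝ᵥ M *ᵥ (M⁻¹ *ᵥ b) = b ⬝ᵥ M⁻¹ *ᵥ b := by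
  rw [mulVec_mulVec, mul_nonsing_inv _ hMdet, one_mulVec, dotProduct_comm]

lemma mulVec_dotProduct_mulVec_le_of_le_smul_inv {M Z : Matrix ι ι ℝ} (hM : M.IsHermitian)
    (hMdet : IsUnit M.det) (hZ : Z.PosSemidef) {t : ℝ} (ht : 0 < t)
    (hZM : ∀ u, u ⬝ᵥ Z *ᵥ u ≤ t * (u ⬝ᵥ M⁻¹ *ᵥ u)) (b : ι → ℝ) :
    Z *ᵥ b ⬝ᵥ M *ᵥ (Z *ᵥ b) ≤ t * (b ⬝ᵥ Z *ᵥ b) := by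
  set y := Z *ᵥ b
  set u := M *ᵥ y
  have huZb : u ⬝ᵥ Z *ᵥ b = y ⬝ᵥ M *ᵥ y := by
    rw [hM.mulVec_dotProduct_of_real]
  have huZu : u ⬝ᵥ Z *ᵥ u ≤ t * (y ⬝ᵥ M *ᵥ y) := by
    have hinv : u ⬝ᵥ M⁻¹ *ᵥ u = y ⬝ᵥ M *ᵥ y := by
        rw [mulVec_mulVec, nonsing_inv_mul _ hMdet, one_mulVec, hM.mulVec_dotProduct_of_real]
    exact hinv ▸ hZM u
  have hbZu : b ⬝ᵥ Z *ᵥ u = u ⬝ᵥ Z *ᵥ b := by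
    rw [← hZ.isHermitian.mulVec_dotProduct_of_real, dotProduct_comm]
  have hnonneg := hZ.dotProduct_mulVec_nonneg (t • b - u)
  simp only [star_trivial, mulVec_sub, mulVec_smul, dotProduct_sub, sub_dotProduct,
    dotProduct_smul, smul_dotProduct, smul_eq_mul, hbZu, huZb] at hnonneg
  nlinarith

end QuadraticForms

/-- `t · (2t(t − 1)w − (w − 2s + q))`
`= t(ts − q) + (ts − w) + t(t − 1)(tw − s) + (t − 1)²(t + 1)w`. -/
lemma sub_two_mul_add_le_of_le_mul {t w s q : ℝ} (ht : 1 ≤ t) (hw : 0 ≤ w) (hws : w ≤ t * s)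
    (hsw : s ≤ t * w) (hqs : q ≤ t * s) : w - 2 * s + q ≤ 2 * t * (t - 1) * w := by
  have ht0 : 0 < t := by linarith
  refine le_of_mul_le_mul_left ?_ ht0
  nlinarith [mul_nonneg ht0.le (sub_nonneg.2 hqs),
    mul_nonneg (mul_nonneg ht0.le (sub_nonneg.2 ht)) (sub_nonneg.2 hsw),
    mul_nonneg (mul_nonneg (sq_nonneg (t - 1)) (by linarith : (0 : ℝ) ≤ t + 1)) hw]

lemma mnorm_le_sqrt_mul_mnorm {n : ℕ} {M : Matrix (Fin n) (Fin n) ℝ} {u v : Fin n → ℝ} {c : ℝ}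
    (hc : 0 ≤ c) (h : u ⬝ᵥ M *ᵥ u ≤ c * (v ⬝ᵥ M *ᵥ v)) : mnorm M u ≤ √c * mnorm M v := by
  rw [mnorm, mnorm, ← Real.sqrt_mul hc]
  exact Real.sqrt_le_sqrt h

theorem approx_inverse_gives_approx_solution_general {n : ℕ}
    {M₀ Z₀ : Matrix (Fin n) (Fin n) ℝ}
    (hM₀ : M₀.PosDef) (hZ₀ : Z₀.PosDef)
    {ε : ℝ} (hε : 0 ≤ ε) (h : MApprox ε Z₀ M₀⁻¹) (b₀ : Fin n → ℝ) :
    mnorm M₀ (M₀⁻¹.mulVec b₀ - Z₀.mulVec b₀)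
      ≤ Real.sqrt (2 * Real.exp ε * (Real.exp ε - 1)) * mnorm M₀ (M₀⁻¹.mulVec b₀) := by
  have ht : 1 ≤ Real.exp ε := Real.one_le_exp hε
  have hdet : IsUnit M₀.det := hM₀.det_pos.ne'.isUnit
  have hw : 0 ≤ b₀ ⬝ᵥ M₀⁻¹ *ᵥ b₀ := by
    simpa using hM₀.inv.posSemidef.dotProduct_mulVec_nonneg b₀
  have hq := mulVec_dotProduct_mulVec_le_of_le_smul_inv hM₀.isHermitian hdet
    hZ₀.posSemidef (Real.exp_pos ε) h.dotProduct_mulVec_le_exp_mul_left b₀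
  refine mnorm_le_sqrt_mul_mnorm (by nlinarith) ?_
  rw [inv_mulVec_sub_dotProduct_mulVec hM₀.isHermitian hdet,
    inv_mulVec_dotProduct_mulVec hdet]
  exact sub_two_mul_add_le_of_le_mul ht hw (h.dotProduct_mulVec_le_exp_mul_right b₀)
    (h.dotProduct_mulVec_le_exp_mul_left b₀) hq

/-- If `Z₀ ≈_ε M₀⁻¹` and `x̃ = Z₀ b₀`, then `x̃` is a `√(2 e^ε (e^ε − 1))`-approximate
solution of `M₀ x = b₀`, where `x* = M₀⁻¹ b₀`. -/
theorem approx_inverse_gives_approx_solution {n : ℕ}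
    {M₀ Z₀ : Matrix (Fin n) (Fin n) ℝ}
    (hM₀symm : M₀.IsSymm) (hZ₀symm : Z₀.IsSymm)
    (hM₀ : M₀.PosDef) (hZ₀ : Z₀.PosDef)
    {ε : ℝ} (hε : 0 ≤ ε) (h : MApprox ε Z₀ M₀⁻¹) (b₀ : Fin n → ℝ) :
    mnorm M₀ (M₀⁻¹.mulVec b₀ - Z₀.mulVec b₀)
      ≤ Real.sqrt (2 * Real.exp ε * (Real.exp ε - 1)) * mnorm M₀ (M₀⁻¹.mulVec b₀) :=
  approx_inverse_gives_approx_solution_general hM₀ hZ₀ hε h b₀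
end

section
/- Let M = D − A be an SDDM matrix, where D is a positive diagonal matrix and A is a nonnegative symmetric matrix. Then D − A D⁻¹ A is also an SDDM matrix. -/
open Matrix

/-- An `n × n` real symmetric matrix is SDDM if it is positive definite, has nonpositive
off-diagonal entries, and is diagonally dominant: `M i i ≥ ∑_{j ≠ i} |M i j|`. -/
def IsSDDM {n : ℕ} (M : Matrix (Fin n) (Fin n) ℝ) : Prop :=
  M.PosDef ∧ (∀ i j, i ≠ j → M i j ≤ 0) ∧
    ∀ i, ∑ j ∈ Finset.univ.erase i, |M i j| ≤ M i i

/-!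
Put `y = D⁻¹ A x`. For symmetric `A` the quadratic form splits as
`2 xᵀ(D - A D⁻¹ A)x = (x - y)ᵀ(D + A)(x - y) + (x + y)ᵀ(D - A)(x + y)`,
and `x - y`, `x + y` are not both zero, so `D - A D⁻¹ A` is positive definite as soon as `D - A`
and `D + A` are; for `D + A` this follows from `xᵀ(D + A)x ≥ |x|ᵀ(D - A)|x|`, valid when `A ≥ 0`.
For a matrix `D - B` with `B ≥ 0`, diagonal dominance says exactly that the row sums of `B` are
at most `d`; for `B = A D⁻¹ A` this follows from `A 𝟙 ≤ d`, since `A D⁻¹ A 𝟙 ≤ A D⁻¹ d = A 𝟙`.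
-/

open Finset

namespace Matrix

variable {ι α : Type*} [Fintype ι]

lemma dotProduct_mulVec_comm_of_isSymm [CommSemiring α] {A : Matrix ι ι α} (hA : A.IsSymm)
    (u v : ι → α) :
    u ⬝ᵥ (A *ᵥ v) = v ⬝ᵥ (A *ᵥ u) := by
  rw [dotProduct_mulVec, ← mulVec_transpose, hA.eq, dotProduct_comm]

lemma two_mul_dotProduct_mulVec_sub_eq {D A : Matrix ι ι ℝ} (hA : A.IsSymm)
    {x y : ι → ℝ} (hy : D *ᵥ y = A *ᵥ x) :
    2 * (x ⬝ᵥ (D *ᵥ x) - x ⬝ᵥ (A *ᵥ y)) =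
      (x - y) ⬝ᵥ ((D + A) *ᵥ (x - y)) + (x + y) ⬝ᵥ ((D - A) *ᵥ (x + y)) := by
  have hyDy : y ⬝ᵥ (D *ᵥ y) = x ⬝ᵥ (A *ᵥ y) := by
    rw [hy, dotProduct_mulVec_comm_of_isSymm hA]
  have hyAx : y ⬝ᵥ (A *ᵥ x) = x ⬝ᵥ (A *ᵥ y) := dotProduct_mulVec_comm_of_isSymm hA y x
  simp only [add_mulVec, sub_mulVec, mulVec_add, mulVec_sub, dotProduct_add, dotProduct_sub,
    add_dotProduct, sub_dotProduct]
  linear_combination 2 * hyAx - 2 * hyDy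

theorem PosDef.sub_mul_inv_mul [DecidableEq ι] {D A : Matrix ι ι ℝ} (hm : (D - A).PosDef)
    (hp : (D + A).PosDef) : (D - A * D⁻¹ * A).PosDef := by
  have hD : D.PosDef := by
    have h := (hm.add hp).smul (show (0 : ℝ) < 2⁻¹ by norm_num)
    rwa [show (2⁻¹ : ℝ) • (D - A + (D + A)) = D by module] at h
  have hA : A.IsHermitian := by simpa using hp.isHermitian.sub hD.isHermitian
  refine .of_dotProduct_mulVec_pos (hD.isHermitian.sub ?_) fun x hx => ?_
  · have := isHermitian_conjTranspose_mul_mul A hD.inv.isHermitian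
    rwa [hA.eq] at this
  set y := D⁻¹ *ᵥ (A *ᵥ x)
  have hy : D *ᵥ y = A *ᵥ x := by
    rw [mulVec_mulVec, mul_nonsing_inv _ ((isUnit_iff_isUnit_det D).mp hD.isUnit), one_mulVec]
  have hsplit := two_mul_dotProduct_mulVec_sub_eq (isHermitian_iff_isSymm.mp hA) hy
  have hquad : x ⬝ᵥ ((D - A * D⁻¹ * A) *ᵥ x) = x ⬝ᵥ (D *ᵥ x) - x ⬝ᵥ (A *ᵥ y) := by
    rw [sub_mulVec, dotProduct_sub, ← mulVec_mulVec, ← mulVec_mulVec]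
  have hne : x - y ≠ 0 ∨ x + y ≠ 0 := by
    by_contra! h
    apply hx
    calc x = (2⁻¹ : ℝ) • ((x - y) + (x + y)) := by module
      _ = 0 := by rw [h.1, h.2, add_zero, smul_zero]
  have hp₀ := hp.posSemidef.dotProduct_mulVec_nonneg (x - y)
  have hm₀ := hm.posSemidef.dotProduct_mulVec_nonneg (x + y)
  rw [star_trivial] at hp₀ hm₀
  rw [star_trivial, hquad]
  rcases hne with h | h
  · linarith [star_trivial (x - y) ▸ hp.dotProduct_mulVec_pos h]
  · linarith [star_trivial (x + y) ▸ hm.dotProduct_mulVec_pos h]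

lemma abs_dotProduct_mulVec_le {A : Matrix ι ι ℝ} (hA : ∀ i j, 0 ≤ A i j) (x : ι → ℝ) :
    |x ⬝ᵥ (A *ᵥ x)| ≤ |x| ⬝ᵥ (A *ᵥ |x|) := by
  simp only [dotProduct, mulVec]
  calc |∑ i, x i * ∑ j, A i j * x j| ≤ ∑ i, |x i| * ∑ j, |A i j * x j| :=
        (abs_sum_le_sum_abs _ _).trans <| sum_le_sum fun i _ => by
          rw [abs_mul]; gcongr; exact abs_sum_le_sum_abs _ _
    _ = ∑ i, |x i| * ∑ j, A i j * |x j| := by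
        simp only [abs_mul, abs_of_nonneg (hA _ _)]

variable [DecidableEq ι]

lemma abs_dotProduct_diagonal_mulVec_abs (d x : ι → ℝ) :
    |x| ⬝ᵥ (diagonal d *ᵥ |x|) = x ⬝ᵥ (diagonal d *ᵥ x) := by
  simp only [dotProduct, mulVec_diagonal, Pi.abs_apply, mul_left_comm _ (d _), abs_mul_abs_self]

theorem PosDef.diagonal_add_of_diagonal_sub {d : ι → ℝ} {A : Matrix ι ι ℝ}
    (hA : ∀ i j, 0 ≤ A i j) (h : (diagonal d - A).PosDef) : (diagonal d + A).PosDef := by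
  have hAh : A.IsHermitian := by simpa using (isHermitian_diagonal d).sub h.isHermitian
  refine .of_dotProduct_mulVec_pos ((isHermitian_diagonal d).add hAh) fun x hx => ?_
  have hx' : |x| ≠ 0 := by simpa using hx
  calc 0 < |x| ⬝ᵥ ((diagonal d - A) *ᵥ |x|) := by simpa using h.dotProduct_mulVec_pos hx'
    _ = x ⬝ᵥ (diagonal d *ᵥ x) - |x| ⬝ᵥ (A *ᵥ |x|) := by
        rw [sub_mulVec, dotProduct_sub, abs_dotProduct_diagonal_mulVec_abs]
    _ ≤ x ⬝ᵥ (diagonal d *ᵥ x) + x ⬝ᵥ (A *ᵥ x) := by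
        linarith [neg_abs_le (x ⬝ᵥ (A *ᵥ x)), abs_dotProduct_mulVec_le hA x]
    _ = star x ⬝ᵥ ((diagonal d + A) *ᵥ x) := by rw [star_trivial, add_mulVec, dotProduct_add]

lemma sum_erase_abs_diagonal_sub_le_iff {d : ι → ℝ} {B : Matrix ι ι ℝ} {i : ι}
    (hB : ∀ j, 0 ≤ B i j) :
    ∑ j ∈ univ.erase i, |(diagonal d - B) i j| ≤ (diagonal d - B) i i ↔ ∑ j, B i j ≤ d i := by
  have hoff : ∀ j ∈ univ.erase i, |(diagonal d - B) i j| = B i j := fun j hj => by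
    rw [sub_apply, diagonal_apply_ne _ (ne_of_mem_erase hj).symm, zero_sub, abs_neg,
      abs_of_nonneg (hB j)]
  rw [sum_congr rfl hoff, sub_apply, diagonal_apply_eq, ← sum_erase_add _ _ (mem_univ i)]
  constructor <;> intro <;> linarith

lemma mul_diagonal_mul_apply [NonUnitalNonAssocSemiring α] (A B : Matrix ι ι α) (e : ι → α)
    (i j : ι) :
    (A * diagonal e * B) i j = ∑ k, A i k * e k * B k j := by
  rw [mul_apply]
  simp only [mul_diagonal]

lemma sum_mul_diagonal_inv_mul_apply_le {d : ι → ℝ} {A : Matrix ι ι ℝ} (hd : ∀ i, 0 < d i)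
    (hA : ∀ i j, 0 ≤ A i j) (hrow : ∀ i, ∑ j, A i j ≤ d i) (i : ι) :
    ∑ j, (A * diagonal d⁻¹ * A) i j ≤ d i :=
  calc ∑ j, (A * diagonal d⁻¹ * A) i j = ∑ k, A i k * (d k)⁻¹ * ∑ j, A k j := by
        simp only [mul_diagonal_mul_apply, Pi.inv_apply, mul_sum]
        exact sum_comm
    _ ≤ ∑ k, A i k * (d k)⁻¹ * d k := by
        gcongr with k
        · exact mul_nonneg (hA i k) (inv_nonneg.mpr (hd k).le)
        · exact hrow k
    _ = ∑ k, A i k := by simp only [mul_assoc, inv_mul_cancel₀ (hd _).ne', mul_one]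
    _ ≤ d i := hrow i

end Matrix

theorem sddm_of_sddm_splitting_general {n : ℕ} (d : Fin n → ℝ) (hd : ∀ i, 0 < d i)
    (A : Matrix (Fin n) (Fin n) ℝ) (hA0 : ∀ i j, 0 ≤ A i j)
    (hM : IsSDDM (Matrix.diagonal d - A)) :
    IsSDDM (Matrix.diagonal d - A * (Matrix.diagonal d)⁻¹ * A) := by
  obtain ⟨hPD, -, hdom⟩ := hM
  have hrow i : ∑ j, A i j ≤ d i := (sum_erase_abs_diagonal_sub_le_iff (hA0 i)).mp (hdom i)
  have hinv : (diagonal d)⁻¹ = diagonal d⁻¹ :=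
    inv_eq_right_inv <| by simp [diagonal_mul_diagonal, fun i => (hd i).ne']
  have hB i j : 0 ≤ (A * diagonal d⁻¹ * A) i j := by
    rw [mul_diagonal_mul_apply]
    exact sum_nonneg fun k _ =>
      mul_nonneg (mul_nonneg (hA0 i k) (inv_nonneg.mpr (hd k).le)) (hA0 k j)
  refine ⟨hPD.sub_mul_inv_mul (hPD.diagonal_add_of_diagonal_sub hA0), fun i j hij => ?_,
    fun i => ?_⟩
  · simpa [hinv, hij] using hB i j
  · rw [hinv, sum_erase_abs_diagonal_sub_le_iff (hB i)]
    exact sum_mul_diagonal_inv_mul_apply_le hd hA0 hrow i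

/-- If `M = D − A` is SDDM with `D` positive diagonal and `A` nonnegative symmetric,
then `D − A D⁻¹ A` is also SDDM. -/
theorem sddm_of_sddm_splitting {n : ℕ} (d : Fin n → ℝ) (hd : ∀ i, 0 < d i)
    (A : Matrix (Fin n) (Fin n) ℝ) (hA : A.IsSymm) (hA0 : ∀ i j, 0 ≤ A i j)
    (hM : IsSDDM (Matrix.diagonal d - A)) :
    IsSDDM (Matrix.diagonal d - A * (Matrix.diagonal d)⁻¹ * A) :=
  sddm_of_sddm_splitting_general d hd A hA0 hM
end

section
/- Let M₀ = D₀ − A₀ be the standard splitting of an SDDM matrix M₀ and let κ = λ_max(M₀)/λ_min(M₀) be its condition number. Then every eigenvalue λ of D₀⁻¹A₀ satisfies |λ| ≤ 1 − 1/κ. -/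
open Matrix

/-!
Write `M = D - A`. An eigenvector `v` of `D⁻¹A` with eigenvalue `μ` satisfies
`vᵀ(D - M)v = μ vᵀDv`, i.e. `μ = 1 - vᵀMv / vᵀDv`. Since `λ_min vᵀv ≤ vᵀMv` and `D ≤ λ_max I`
(the diagonal entries of `M` are values of its Rayleigh quotient), `μ ≤ 1 - λ_min/λ_max`.
For the lower bound, `A ≥ 0` entrywise gives `|v|ᵀM|v| ≤ vᵀ(D + A)v = 2 vᵀDv - vᵀMv`,
and `λ_min vᵀv = λ_min |v|ᵀ|v| ≤ |v|ᵀM|v|` then yields `μ ≥ λ_min/λ_max - 1`.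
-/

namespace Matrix

section Spectral

open scoped ComplexOrder

variable {𝕜 ι : Type*} [RCLike 𝕜] [Fintype ι] [DecidableEq ι] {A : Matrix ι ι 𝕜}

theorem IsHermitian.sub_smul_one_eq (hA : A.IsHermitian) (c : ℝ) :
    A - (c : 𝕜) • 1 = (↑hA.eigenvectorUnitary : Matrix ι ι 𝕜) *
      diagonal (fun i => ((hA.eigenvalues i - c : ℝ) : 𝕜)) *
        star (↑hA.eigenvectorUnitary : Matrix ι ι 𝕜) := by
  set U : Matrix ι ι 𝕜 := ↑hA.eigenvectorUnitary
  have hU : U * star U = 1 := Unitary.mul_star_self_of_mem hA.eigenvectorUnitary.2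
  conv_lhs => rw [hA.spectral_theorem, Unitary.conjStarAlgAut_apply]
  simp only [RCLike.ofReal_sub, ← diagonal_sub]
  rw [Matrix.mul_sub, Matrix.sub_mul, ← smul_one_eq_diagonal, Matrix.mul_smul, Matrix.mul_one,
    Matrix.smul_mul, hU]
  rfl

theorem IsHermitian.posSemidef_sub_smul_one (hA : A.IsHermitian) {c : ℝ}
    (hc : ∀ i, c ≤ hA.eigenvalues i) : (A - (c : 𝕜) • 1).PosSemidef := by
  rw [hA.sub_smul_one_eq c]
  exact (PosSemidef.diagonal fun i => RCLike.ofReal_nonneg.2 (sub_nonneg.2 (hc i))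
    ).mul_mul_conjTranspose_same _

theorem IsHermitian.posSemidef_smul_one_sub (hA : A.IsHermitian) {c : ℝ}
    (hc : ∀ i, hA.eigenvalues i ≤ c) : ((c : 𝕜) • 1 - A).PosSemidef := by
  rw [← neg_sub, hA.sub_smul_one_eq c, ← Matrix.neg_mul, ← Matrix.mul_neg, diagonal_neg]
  refine (PosSemidef.diagonal fun i => ?_).mul_mul_conjTranspose_same _
  simpa [← RCLike.ofReal_neg] using hc i

end Spectral

theorem mulVec_eq_smul_mulVec_of_inv_mul {ι R : Type*} [Fintype ι] [DecidableEq ι] [CommRing R]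
    {D B : Matrix ι ι R} (hD : IsUnit D.det) {μ : R} {v : ι → R}
    (h : (D⁻¹ * B) *ᵥ v = μ • v) : B *ᵥ v = μ • D *ᵥ v := by
  rw [← mul_nonsing_inv_cancel_left D B hD, ← mulVec_mulVec, h, mulVec_smul]

section Real

variable {ι : Type*} [DecidableEq ι] {M : Matrix ι ι ℝ} {c : ℝ}

theorem mul_dotProduct_self_le_of_posSemidef_sub [Fintype ι] (h : (M - c • 1).PosSemidef)
    (x : ι → ℝ) : c * (x ⬝ᵥ x) ≤ x ⬝ᵥ M *ᵥ x := by
  have := h.dotProduct_mulVec_nonneg x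
  rw [star_trivial, sub_mulVec, smul_mulVec, one_mulVec, dotProduct_sub, dotProduct_smul,
    smul_eq_mul] at this
  linarith

theorem dotProduct_mulVec_le_of_posSemidef_sub [Fintype ι] (h : (c • 1 - M).PosSemidef)
    (x : ι → ℝ) : x ⬝ᵥ M *ᵥ x ≤ c * (x ⬝ᵥ x) := by
  have := h.dotProduct_mulVec_nonneg x
  rw [star_trivial, sub_mulVec, smul_mulVec, one_mulVec, dotProduct_sub, dotProduct_smul,
    smul_eq_mul] at this
  linarith

theorem posSemidef_smul_one_sub_diagonal_diag (h : (c • 1 - M).PosSemidef) :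
    (c • 1 - diagonal M.diag).PosSemidef := by
  rw [smul_one_eq_diagonal, diagonal_sub]
  refine PosSemidef.diagonal fun i => ?_
  simpa using h.diag_nonneg (i := i)

theorem abs_dotProduct_mulVec_abs_add_le [Fintype ι] (hoff : ∀ i j, i ≠ j → M i j ≤ 0)
    (v : ι → ℝ) : |v| ⬝ᵥ M *ᵥ |v| + v ⬝ᵥ M *ᵥ v ≤ 2 * (v ⬝ᵥ diagonal M.diag *ᵥ v) := by
  simp only [dotProduct, mulVec, Finset.mul_sum, ← Finset.sum_add_distrib]
  gcongr with i _ j _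
  rw [Pi.abs_apply, Pi.abs_apply]
  obtain rfl | hij := eq_or_ne i j
  · rw [diagonal_apply_eq, diag_apply, mul_left_comm, abs_mul_abs_self]
    linarith
  · rw [diagonal_apply_ne _ hij]
    nlinarith [hoff i j hij, neg_abs_le (v i * v j), abs_mul (v i) (v j)]

theorem abs_jacobi_eigenvalue_le_one_sub_div [Fintype ι] (hoff : ∀ i j, i ≠ j → M i j ≤ 0)
    {C : ℝ} (hc : 0 < c) (hlow : (M - c • 1).PosSemidef) (hup : (C • 1 - M).PosSemidef)
    {μ : ℝ} {v : ι → ℝ} (hv : v ≠ 0)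
    (hμ : (diagonal M.diag - M) *ᵥ v = μ • diagonal M.diag *ᵥ v) :
    |μ| ≤ 1 - c / C := by
  set S := v ⬝ᵥ v
  set P := v ⬝ᵥ diagonal M.diag *ᵥ v
  set Q := v ⬝ᵥ M *ᵥ v
  have hS : 0 < S :=
    (Fintype.sum_nonneg fun i => mul_self_nonneg (v i)).lt_of_ne'
      (dotProduct_self_eq_zero.not.2 hv)
  have hQ : c * S ≤ Q := mul_dotProduct_self_le_of_posSemidef_sub hlow v
  have hP : P ≤ C * S :=
    dotProduct_mulVec_le_of_posSemidef_sub (posSemidef_smul_one_sub_diagonal_diag hup) v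
  have habs : c * S ≤ |v| ⬝ᵥ M *ᵥ |v| := by
    simpa [S, dotProduct, abs_mul_abs_self] using
      mul_dotProduct_self_le_of_posSemidef_sub hlow |v|
  have h2P : |v| ⬝ᵥ M *ᵥ |v| + Q ≤ 2 * P := abs_dotProduct_mulVec_abs_add_le hoff v
  have hμP : P - Q = μ * P := by
    simpa [sub_mulVec, dotProduct_sub] using congrArg (v ⬝ᵥ ·) hμ
  have hPpos : 0 < P := by linarith [mul_pos hc hS]
  have hC : 0 < C := pos_of_mul_pos_left (hPpos.trans_le hP) hS.le
  have hcP : c / C * P ≤ c * S :=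
    calc c / C * P ≤ c / C * (C * S) := by gcongr
      _ = c * S := by field_simp
  rw [abs_le]
  constructor
  · refine le_of_mul_le_mul_right ?_ hPpos
    linarith
  · refine le_of_mul_le_mul_right ?_ hPpos
    linarith

end Real

end Matrix

/-- Standard splitting `M₀ = D₀ − A₀` of an SDDM matrix: every eigenvalue `λ` of `D₀⁻¹ A₀`
satisfies `|λ| ≤ 1 − 1/κ`, where `κ = λ_max(M₀)/λ_min(M₀)` is the condition number. -/
theorem eigenvalue_bound_of_standard_splitting {n : ℕ}
    {M : Matrix (Fin n) (Fin n) ℝ} (hM : IsSDDM M) (hHerm : M.IsHermitian)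
    {lmax lmin κ : ℝ}
    (hmax : IsGreatest (Set.range hHerm.eigenvalues) lmax)
    (hmin : IsLeast (Set.range hHerm.eigenvalues) lmin)
    (hκ : κ = lmax / lmin) :
    ∀ (μ : ℝ) (v : Fin n → ℝ), v ≠ 0 →
      ((Matrix.diagonal fun i => M i i)⁻¹ *
        (Matrix.diagonal (fun i => M i i) - M)).mulVec v = μ • v →
      |μ| ≤ 1 - 1 / κ := by
  obtain ⟨hPD, hoff, -⟩ := hM
  intro μ v hv hμ
  have hlmin : 0 < lmin := by
    obtain ⟨i, rfl⟩ := hmin.1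
    exact hPD.eigenvalues_pos i
  have hD : IsUnit (diagonal M.diag).det := by
    rw [det_diagonal]
    exact (Finset.prod_pos fun i _ => hPD.diag_pos).ne'.isUnit
  have hlow := hHerm.posSemidef_sub_smul_one fun i => hmin.2 ⟨i, rfl⟩
  have hup := hHerm.posSemidef_smul_one_sub fun i => hmax.2 ⟨i, rfl⟩
  rw [RCLike.ofReal_real_eq_id, id] at hlow hup
  rw [hκ, one_div_div]
  exact abs_jacobi_eigenvalue_le_one_sub_div hoff hlmin hlow hup hv
    (mulVec_eq_smul_mulVec_of_inv_mul hD hμ)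
end

section
/- Let M₀, M₁, …, M_d be SDDM matrices with M_i = D_i − A_i, where each D_i is a positive diagonal matrix and each A_i is a nonnegative symmetric matrix, and let ε₀, …, ε_d ≥ 0 satisfy: (1) D_i − A_i ≈_{ε_{i−1}} D_{i−1} − A_{i−1} D_{i−1}⁻¹ A_{i−1} for i = 1, …, d; (2) D_i ≈_{ε_{i−1}} D_{i−1} for i = 1, …, d; and (3) D_d ≈_{ε_d} D_d − A_d. Define Z_d = D_d⁻¹ and, for i = d−1 down to 0, Z_i = (1/2)·[D_i⁻¹ + (I + D_i⁻¹A_i) Z_{i+1} (I + A_i D_i⁻¹)]. Then Z₀ ≈_{Σ_{i=0}^{d} ε_i} M₀⁻¹. -/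
open Matrix

/-!
Writing `N = D - A D⁻¹ A`, one has `(D - A)(1 + D⁻¹ A) = N` and `(D - A) D⁻¹ = 1 - A D⁻¹`, hence
`(D - A)⁻¹ = ½ [D⁻¹ + (1 + D⁻¹ A) N⁻¹ (1 + A D⁻¹)]`: the inverse of `M_i` is the solver step
applied to `N_i⁻¹`. The relation `≈` is preserved by inversion, congruence, adding a positive
semidefinite matrix and scaling, and its errors add under composition. So the solver step is
monotone for `≈`, and backward induction gives `Z_i ≈ M_i⁻¹` with error `ε_i + ⋯ + ε_d`, using
`Z_{i+1} ≈ M_{i+1}⁻¹ ≈ N_i⁻¹`.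
-/

open scoped MatrixOrder

section LoewnerOrder

variable {m : Type*} [Fintype m]

namespace Matrix.PosDef

theorem two_mul_dotProduct_sub_le_dotProduct_inv_mulVec [DecidableEq m] {X : Matrix m m ℝ}
    (hX : X.PosDef) (u x : m → ℝ) : 2 * (u ⬝ᵥ x) - u ⬝ᵥ (X *ᵥ u) ≤ x ⬝ᵥ (X⁻¹ *ᵥ x) := by
  set a := X⁻¹ *ᵥ x
  have hXa : X *ᵥ a = x := by
    rw [mulVec_mulVec, mul_nonsing_inv _ hX.det_pos.ne'.isUnit, one_mulVec]
  have hsymm : a ⬝ᵥ (X *ᵥ u) = u ⬝ᵥ x := by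
    rw [dotProduct_mulVec, ← mulVec_transpose, ← conjTranspose_eq_transpose_of_trivial,
      hX.isHermitian.eq, hXa, dotProduct_comm]
  have hw : 0 ≤ (a - u) ⬝ᵥ (X *ᵥ (a - u)) := by
    simpa using hX.posSemidef.dotProduct_mulVec_nonneg (a - u)
  rw [mulVec_sub, sub_dotProduct, dotProduct_sub, dotProduct_sub, hXa, hsymm,
    dotProduct_comm a x] at hw
  linarith

/-- `x ⬝ᵥ Y⁻¹ x` is the value of `2 u ⬝ᵥ x - u ⬝ᵥ Y u` at `u = Y⁻¹ x`, which only grows when `Y` is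
replaced by `X ≤ Y`, and is then bounded by `x ⬝ᵥ X⁻¹ x`. -/
theorem inv_anti [DecidableEq m] {X Y : Matrix m m ℝ} (hX : X.PosDef) (hXY : X ≤ Y) :
    Y⁻¹ ≤ X⁻¹ := by
  have hY : Y.PosDef := by simpa using PosDef.posSemidef_add hXY hX
  refine .of_dotProduct_mulVec_nonneg (hX.isHermitian.inv.sub hY.isHermitian.inv) fun x => ?_
  set u := Y⁻¹ *ᵥ x
  have hYu : Y *ᵥ u = x := by
    rw [mulVec_mulVec, mul_nonsing_inv _ hY.det_pos.ne'.isUnit, one_mulVec]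
  have hXY' : u ⬝ᵥ (X *ᵥ u) ≤ u ⬝ᵥ (Y *ᵥ u) := by
    have := hXY.dotProduct_mulVec_nonneg u
    simp only [star_trivial, sub_mulVec, dotProduct_sub] at this
    linarith
  have := hX.two_mul_dotProduct_sub_le_dotProduct_inv_mulVec u x
  rw [hYu] at hXY'
  simp only [star_trivial, sub_mulVec, dotProduct_sub]
  rw [dotProduct_comm x u]
  linarith

end Matrix.PosDef

namespace MApprox

variable {α β : ℝ} {X Y W : Matrix m m ℝ}

theorem iff_le : MApprox α X Y ↔ Real.exp (-α) • X ≤ Y ∧ Y ≤ Real.exp α • X :=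
  Iff.rfl

theorem trans (hXY : MApprox α X Y) (hYW : MApprox β Y W) : MApprox (α + β) X W := by
  rw [iff_le] at *
  constructor
  · calc Real.exp (-(α + β)) • X = Real.exp (-β) • Real.exp (-α) • X := by
          rw [smul_smul, ← Real.exp_add, neg_add, add_comm]
      _ ≤ Real.exp (-β) • Y := smul_le_smul_of_nonneg_left hXY.1 (Real.exp_nonneg _)
      _ ≤ W := hYW.1
  · calc W ≤ Real.exp β • Y := hYW.2
      _ ≤ Real.exp β • Real.exp α • X :=
        smul_le_smul_of_nonneg_left hXY.2 (Real.exp_nonneg _)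
      _ = Real.exp (α + β) • X := by rw [smul_smul, ← Real.exp_add, add_comm]

theorem smul {c : ℝ} (hc : 0 ≤ c) (h : MApprox α X Y) : MApprox α (c • X) (c • Y) := by
  rw [iff_le, smul_comm _ c, smul_comm _ c] at *
  exact ⟨smul_le_smul_of_nonneg_left h.1 hc, smul_le_smul_of_nonneg_left h.2 hc⟩

theorem conj (C : Matrix m m ℝ) (h : MApprox α X Y) :
    MApprox α (C * X * Cᵀ) (C * Y * Cᵀ) := by
  rw [iff_le, ← conjTranspose_eq_transpose_of_trivial] at *
  have key {P Q : Matrix m m ℝ} (hPQ : P ≤ Q) : C * P * Cᴴ ≤ C * Q * Cᴴ :=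
    star_right_conjugate_le_conjugate hPQ C
  simpa only [Matrix.mul_smul, Matrix.smul_mul] using And.imp key key h

theorem add_left {P : Matrix m m ℝ} (hα : 0 ≤ α) (hP : 0 ≤ P) (h : MApprox α X Y) :
    MApprox α (P + X) (P + Y) := by
  rw [iff_le, smul_add, smul_add] at *
  exact ⟨add_le_add (smul_le_of_le_one_left hP (Real.exp_le_one_iff.mpr (by linarith))) h.1,
    add_le_add (le_smul_of_one_le_left hP (Real.one_le_exp hα)) h.2⟩

theorem posDef (hX : X.PosDef) (h : MApprox α X Y) : Y.PosDef := by
  simpa using PosDef.posSemidef_add h.1 (hX.smul (Real.exp_pos (-α)))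

theorem inv [DecidableEq m] (hX : X.PosDef) (h : MApprox α X Y) : MApprox α X⁻¹ Y⁻¹ := by
  have hY := h.posDef hX
  have inv_exp_smul (a : ℝ) : (Real.exp a • X)⁻¹ = Real.exp (-a) • X⁻¹ := by
    let := invertibleOfNonzero (Real.exp_pos a).ne'
    rw [Matrix.inv_smul _ _ hX.det_pos.ne'.isUnit, invOf_eq_inv, Real.exp_neg]
  rw [iff_le] at *
  constructor
  · simpa only [inv_exp_smul] using hY.inv_anti h.2
  · simpa only [inv_exp_smul, neg_neg] using (hX.smul (Real.exp_pos (-α))).inv_anti h.1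

end MApprox

end LoewnerOrder

noncomputable def solverStep {K m : Type*} [Field K] [Fintype m] [DecidableEq m]
    (D A Z : Matrix m m K) : Matrix m m K :=
  (1 / 2 : K) • (D⁻¹ + (1 + D⁻¹ * A) * Z * (1 + A * D⁻¹))

theorem inv_sub_eq_solverStep {K m : Type*} [Field K] [NeZero (2 : K)] [Fintype m]
    [DecidableEq m] {D A : Matrix m m K} (hD : IsUnit D.det)
    (hN : IsUnit (D - A * D⁻¹ * A).det) :
    (D - A)⁻¹ = solverStep D A (D - A * D⁻¹ * A)⁻¹ := by
  have hDD : D * D⁻¹ = 1 := mul_nonsing_inv _ hD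
  have hleft : (D - A) * D⁻¹ = 1 - A * D⁻¹ := by rw [Matrix.sub_mul, hDD]
  have hright : (D - A) * (1 + D⁻¹ * A) = D - A * D⁻¹ * A := by
    rw [Matrix.mul_add, mul_one, Matrix.sub_mul, ← Matrix.mul_assoc, hDD, one_mul,
      ← Matrix.mul_assoc]
    abel
  apply inv_eq_right_inv
  calc (D - A) * solverStep D A (D - A * D⁻¹ * A)⁻¹
      = (1 / 2 : K) • ((D - A) * D⁻¹
          + (D - A) * (1 + D⁻¹ * A) * (D - A * D⁻¹ * A)⁻¹ * (1 + A * D⁻¹)) := by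
        rw [solverStep, Matrix.mul_smul, Matrix.mul_add]
        simp only [Matrix.mul_assoc]
    _ = (1 / 2 : K) • ((1 - A * D⁻¹) + (1 + A * D⁻¹)) := by
        rw [hleft, hright, mul_nonsing_inv _ hN, one_mul]
    _ = 1 := by
        rw [sub_add_add_cancel, ← two_smul K, smul_smul, one_div, inv_mul_cancel₀ two_ne_zero,
          one_smul]

theorem MApprox.solverStep {m : Type*} [Fintype m] [DecidableEq m] {α : ℝ}
    {D A Z W : Matrix m m ℝ} (hD : D.PosDef) (hA : A.IsSymm) (hα : 0 ≤ α)
    (h : MApprox α Z W) : MApprox α (solverStep D A Z) (solverStep D A W) := by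
  have hC : (1 + D⁻¹ * A)ᵀ = 1 + A * D⁻¹ := by
    rw [transpose_add, transpose_one, transpose_mul, transpose_nonsing_inv,
      ← conjTranspose_eq_transpose_of_trivial D, hD.isHermitian.eq, hA.eq]
  have hDinv : 0 ≤ D⁻¹ := nonneg_iff_posSemidef.mpr hD.inv.posSemidef
  have := ((h.conj (1 + D⁻¹ * A)).add_left hα hDinv).smul (by norm_num : (0 : ℝ) ≤ 1 / 2)
  rwa [hC] at this

theorem solver_operator_approx_inverse_general {n : ℕ} (d : ℕ)
    (D A : ℕ → Matrix (Fin n) (Fin n) ℝ) (ε : ℕ → ℝ)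
    (hD : ∀ i ≤ d, ∃ dv : Fin n → ℝ, (∀ k, 0 < dv k) ∧ D i = Matrix.diagonal dv)
    (hAsymm : ∀ i ≤ d, (A i).IsSymm)
    (hSDDM : ∀ i ≤ d, IsSDDM (D i - A i))
    (hε : ∀ i ≤ d, 0 ≤ ε i)
    (h1 : ∀ i, 1 ≤ i → i ≤ d →
      MApprox (ε (i - 1)) (D i - A i) (D (i - 1) - A (i - 1) * (D (i - 1))⁻¹ * A (i - 1)))
    (h3 : MApprox (ε d) (D d) (D d - A d))
    (Z : ℕ → Matrix (Fin n) (Fin n) ℝ)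
    (hZd : Z d = (D d)⁻¹)
    (hZ : ∀ i < d, Z i =
      (1 / 2 : ℝ) • ((D i)⁻¹ + (1 + (D i)⁻¹ * A i) * Z (i + 1) * (1 + A i * (D i)⁻¹))) :
    MApprox (∑ i ∈ Finset.range (d + 1), ε i) (Z 0) ((D 0 - A 0)⁻¹) := by
  have hDpd (i : ℕ) (hi : i ≤ d) : (D i).PosDef := by
    obtain ⟨dv, hdv, hDi⟩ := hD i hi
    exact hDi ▸ PosDef.diagonal hdv
  suffices key : ∀ i ≤ d,
      MApprox (∑ j ∈ Finset.Ico i (d + 1), ε j) (Z i) ((D i - A i)⁻¹) by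
    simpa only [Finset.range_eq_Ico] using key 0 d.zero_le
  intro i hi
  induction hi using Nat.decreasingInduction with
  | self =>
    rw [Nat.Ico_succ_singleton, Finset.sum_singleton, hZd]
    exact h3.inv (hDpd d le_rfl)
  | of_succ i hi ih =>
    have hM := (hSDDM (i + 1) hi).1
    have hMN := h1 (i + 1) i.succ_pos' hi
    rw [Nat.add_sub_cancel] at hMN
    have hN := hMN.posDef hM
    have htail : 0 ≤ ∑ j ∈ Finset.Ico (i + 1) (d + 1), ε j :=
      Finset.sum_nonneg fun j hj => hε j (Nat.lt_succ_iff.mp (Finset.mem_Ico.mp hj).2)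
    rw [Finset.sum_eq_sum_Ico_succ_bot (by omega), add_comm, hZ i hi,
      inv_sub_eq_solverStep (hDpd i hi.le).det_pos.ne'.isUnit hN.det_pos.ne'.isUnit]
    exact (ih.trans (hMN.inv hM)).solverStep (hDpd i hi.le) (hAsymm i hi.le)
      (add_nonneg htail (hε i hi.le))

/-- Given an inverse approximated chain `{(D_i, A_i)}_{i=0}^d` of SDDM matrices
`M_i = D_i − A_i` and the solver operator `Z_i` defined backwards by
`Z_d = D_d⁻¹` and `Z_i = (1/2)[D_i⁻¹ + (I + D_i⁻¹A_i) Z_{i+1} (I + A_i D_i⁻¹)]`,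
we have `Z₀ ≈_{Σ_{i=0}^d ε_i} M₀⁻¹`. -/
theorem solver_operator_approx_inverse {n : ℕ} (d : ℕ)
    (D A : ℕ → Matrix (Fin n) (Fin n) ℝ) (ε : ℕ → ℝ)
    (hD : ∀ i ≤ d, ∃ dv : Fin n → ℝ, (∀ k, 0 < dv k) ∧ D i = Matrix.diagonal dv)
    (hAsymm : ∀ i ≤ d, (A i).IsSymm)
    (hAnn : ∀ i ≤ d, ∀ k l, 0 ≤ A i k l)
    (hSDDM : ∀ i ≤ d, IsSDDM (D i - A i))
    (hε : ∀ i ≤ d, 0 ≤ ε i)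
    (h1 : ∀ i, 1 ≤ i → i ≤ d →
      MApprox (ε (i - 1)) (D i - A i) (D (i - 1) - A (i - 1) * (D (i - 1))⁻¹ * A (i - 1)))
    (h2 : ∀ i, 1 ≤ i → i ≤ d → MApprox (ε (i - 1)) (D i) (D (i - 1)))
    (h3 : MApprox (ε d) (D d) (D d - A d))
    (Z : ℕ → Matrix (Fin n) (Fin n) ℝ)
    (hZd : Z d = (D d)⁻¹)
    (hZ : ∀ i < d, Z i =
      (1 / 2 : ℝ) • ((D i)⁻¹ + (1 + (D i)⁻¹ * A i) * Z (i + 1) * (1 + A i * (D i)⁻¹))) :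
    MApprox (∑ i ∈ Finset.range (d + 1), ε i) (Z 0) ((D 0 - A 0)⁻¹) :=
  solver_operator_approx_inverse_general d D A ε hD hAsymm hSDDM hε h1 h3 Z hZd hZ
end

section
/- Let A be a real n×E matrix, let L = AAᵀ, and let D be a diagonal E×E matrix. Then for every v ∈ ℝⁿ, ‖A D Aᵀ v‖_L ≤ μ_n(L) · (max_e |D_ee|) · ‖v‖_L, where μ_n(L) is the largest eigenvalue of L and ‖u‖_L = √(uᵀLu). -/
open Matrix

/-- The Laplacian seminorm `‖v‖_L = √(vᵀ L v)` induced by a PSD matrix `L`. -/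
noncomputable def lnorm {n : ℕ} (L : Matrix (Fin n) (Fin n) ℝ) (v : Fin n → ℝ) : ℝ :=
  Real.sqrt (v ⬝ᵥ L.mulVec v)

/-!
Since `uᵀ (A Aᵀ) u = ‖Aᵀ u‖²`, the seminorm `‖u‖_L` is the Euclidean norm of `Aᵀ u`, so the
left-hand side is `‖Aᵀ A D (Aᵀ v)‖₂ ≤ ‖Aᵀ A‖ ‖D‖ ‖Aᵀ v‖₂` in the `ℓ²` operator norm. Here
`‖D‖ = maxₑ |dₑ|`, and `‖Aᵀ A‖ = ‖Aᵀ‖² ≤ μ_n(L)` because `L ≤ μ_n(L) • 1` in the Loewner order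
gives `‖Aᵀ p‖² = pᵀ L p ≤ μ_n(L) ‖p‖²`.
-/

open scoped MatrixOrder Matrix.Norms.L2Operator

theorem EuclideanSpace.norm_eq_sqrt_dotProduct {n : Type*} [Fintype n] (x : EuclideanSpace ℝ n) :
    ‖x‖ = √(x.ofLp ⬝ᵥ x.ofLp) := by
  simp [EuclideanSpace.norm_eq, dotProduct, sq]

namespace Matrix

variable {m n : Type*} [Fintype m] [Fintype n]

theorem IsHermitian.dotProduct_mulVec_le_of_eigenvalues_le [DecidableEq n]
    {L : Matrix n n ℝ} (hL : L.IsHermitian) {μ : ℝ} (h : ∀ i, hL.eigenvalues i ≤ μ)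
    (x : n → ℝ) : x ⬝ᵥ L *ᵥ x ≤ μ * (x ⬝ᵥ x) := by
  have hle : L ≤ algebraMap ℝ _ μ := le_algebraMap_of_spectrum_le (by
    rw [hL.spectrum_real_eq_range_eigenvalues]
    rintro _ ⟨i, rfl⟩
    exact h i) hL
  have := (le_iff.mp hle).dotProduct_mulVec_nonneg x
  simpa [Algebra.algebraMap_eq_smul_one, sub_mulVec, dotProduct_sub, smul_mulVec] using this

theorem dotProduct_mul_transpose_mulVec (A : Matrix m n ℝ) (u : m → ℝ) :
    u ⬝ᵥ (A * Aᵀ) *ᵥ u = (Aᵀ *ᵥ u) ⬝ᵥ (Aᵀ *ᵥ u) := by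
  rw [← mulVec_mulVec, dotProduct_mulVec, ← mulVec_transpose]

theorem l2_opNorm_transpose_le_sqrt [DecidableEq m] (A : Matrix m n ℝ)
    (hL : (A * Aᵀ).IsHermitian) {μ : ℝ} (h : ∀ i, hL.eigenvalues i ≤ μ) : ‖Aᵀ‖ ≤ √μ := by
  refine ContinuousLinearMap.opNorm_le_bound _ (Real.sqrt_nonneg μ) fun p => ?_
  have hp := hL.dotProduct_mulVec_le_of_eigenvalues_le h p.ofLp
  rw [dotProduct_mul_transpose_mulVec] at hp
  simp only [LinearEquiv.trans_apply, LinearMap.coe_toContinuousLinearMap', toLpLin_apply]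
  rw [EuclideanSpace.norm_eq_sqrt_dotProduct, EuclideanSpace.norm_eq_sqrt_dotProduct,
    ← Real.sqrt_mul' _ (by simpa using dotProduct_self_star_nonneg p.ofLp), WithLp.ofLp_toLp]
  exact Real.sqrt_le_sqrt hp

theorem l2_opNorm_transpose_mul_self_le [DecidableEq m] [DecidableEq n] (A : Matrix m n ℝ)
    (hL : (A * Aᵀ).IsHermitian) {μ : ℝ} (h₀ : 0 ≤ μ) (h : ∀ i, hL.eigenvalues i ≤ μ) :
    ‖Aᵀ * A‖ ≤ μ := by
  have hA := l2_opNorm_transpose_le_sqrt A hL h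
  calc ‖Aᵀ * A‖ = ‖Aᵀ‖ * ‖Aᵀ‖ := by
        rw [← conjTranspose_eq_transpose_of_trivial, l2_opNorm_conjTranspose_mul_self,
          l2_opNorm_conjTranspose]
    _ ≤ √μ * √μ := mul_le_mul hA hA (norm_nonneg _) (Real.sqrt_nonneg μ)
    _ = μ := Real.mul_self_sqrt h₀

end Matrix

theorem lnorm_mul_transpose_self {n E : ℕ} (A : Matrix (Fin n) (Fin E) ℝ) (u : Fin n → ℝ) :
    lnorm (A * Aᵀ) u = ‖WithLp.toLp 2 (Aᵀ *ᵥ u)‖ := by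
  rw [lnorm, EuclideanSpace.norm_eq_sqrt_dotProduct, dotProduct_mul_transpose_mulVec]

theorem weighted_gram_seminorm_bound_general {n E : ℕ} [NeZero E]
    (A : Matrix (Fin n) (Fin E) ℝ) (d : Fin E → ℝ)
    (hL : (A * Aᵀ).IsHermitian)
    (μn : ℝ) (hμ : IsGreatest (Set.range hL.eigenvalues) μn)
    (v : Fin n → ℝ) :
    lnorm (A * Aᵀ) ((A * Matrix.diagonal d * Aᵀ).mulVec v)
      ≤ μn * (Finset.univ.sup' Finset.univ_nonempty fun e : Fin E => |d e|) *
          lnorm (A * Aᵀ) v := by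
  set M := Finset.univ.sup' Finset.univ_nonempty fun e : Fin E => |d e|
  have hdM (e : Fin E) : |d e| ≤ M := Finset.le_sup' (fun e => |d e|) (Finset.mem_univ e)
  have hμ₀ : 0 ≤ μn := by
    obtain ⟨i, rfl⟩ := hμ.1
    exact eigenvalues_self_mul_conjTranspose_nonneg A i
  have hμL (i : Fin n) : hL.eigenvalues i ≤ μn := hμ.2 ⟨i, rfl⟩
  have hD : ‖diagonal d‖ ≤ M := (l2_opNorm_diagonal d).trans_le <|
    (pi_norm_le_iff_of_nonneg <| (abs_nonneg _).trans (hdM 0)).mpr hdM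
  set w := WithLp.toLp 2 (Aᵀ *ᵥ v)
  have hw : Aᵀ *ᵥ ((A * diagonal d * Aᵀ) *ᵥ v) = (Aᵀ * A * diagonal d) *ᵥ w.ofLp := by
    simp only [w, mulVec_mulVec, Matrix.mul_assoc]
  rw [lnorm_mul_transpose_self, lnorm_mul_transpose_self, hw]
  calc ‖(EuclideanSpace.equiv _ ℝ).symm ((Aᵀ * A * diagonal d) *ᵥ w)‖
      ≤ ‖Aᵀ * A * diagonal d‖ * ‖w‖ := l2_opNorm_mulVec _ w
    _ ≤ ‖Aᵀ * A‖ * ‖diagonal d‖ * ‖w‖ := by gcongr; exact l2_opNorm_mul _ _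
    _ ≤ μn * M * ‖w‖ := by gcongr; exact l2_opNorm_transpose_mul_self_le A hL hμ₀ hμL

/-- For `L = AAᵀ` and diagonal `D`, every `v` satisfies
`‖A D Aᵀ v‖_L ≤ μ_n(L) · (max_e |D_ee|) · ‖v‖_L`, where `μ_n(L)` is the largest
eigenvalue of `L`. -/
theorem weighted_gram_seminorm_bound {n E : ℕ} [NeZero n] [NeZero E]
    (A : Matrix (Fin n) (Fin E) ℝ) (d : Fin E → ℝ)
    (hL : (A * Aᵀ).IsHermitian)
    (μn : ℝ) (hμ : IsGreatest (Set.range hL.eigenvalues) μn)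
    (v : Fin n → ℝ) :
    lnorm (A * Aᵀ) ((A * Matrix.diagonal d * Aᵀ).mulVec v)
      ≤ μn * (Finset.univ.sup' Finset.univ_nonempty fun e : Fin E => |d e|) *
          lnorm (A * Aᵀ) v :=
  weighted_gram_seminorm_bound_general A d hL μn hμ v
end
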